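/- Let D ⊂ ℝ² be open and connected, let λ ∈ ℝ, and let φ : D → ℝ be a C² function with Δφ(x) + λφ(x) = 0 for all x ∈ D. If φ is constant on some nonempty open subset of D, then φ is constant on all of D. -/

import Mathlib

open Set Metric MeasureTheory
open scoped RealInnerProductSpace Real ENNReal

noncomputable section

/-- The Euclidean plane ℝ². -/
abbrev Plane := EuclideanSpace ℝ (Fin 2)

/-- The point (a, b) ∈ ℝ². -/
def pt (a b : ℝ) : Plane := WithLp.toLp 2 ![a, b]

/-- Identify a vector in ℝ² with a complex number. -/
def toC (v : Plane) : ℂ := ⟨v 0, v 1⟩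

/-- ∠(v): the angle in (−π,π] from the positive horizontal semi-axis to `v`. -/
def ang (v : Plane) : ℝ := (toC v).arg

/-- ∠(v,w): the angle ∠(v) − ∠(w) reduced mod 2π to (−π,π]. -/
def ang2 (v w : Plane) : ℝ := (toC v / toC w).arg

/-- A weak Neumann eigenfunction on a (bounded open) set `D` with eigenvalue `lam`:
continuous on the closure of `D`, not identically zero on `D`, C¹ on `D` with
square-integrable gradient, satisfying the weak Neumann eigenvalue identity against
all smooth test functions. -/
def IsWeakNeumannEF (D : Set Plane) (lam : ℝ) (φ : Plane → ℝ) : Prop :=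
  ContinuousOn φ (closure D) ∧
  (∃ x ∈ D, φ x ≠ 0) ∧
  ContDiffOn ℝ 1 φ D ∧
  IntegrableOn (fun x => ‖gradient φ x‖ ^ 2) D ∧
  ∀ ψ : Plane → ℝ, ContDiff ℝ (⊤ : ℕ∞) ψ →
    ∫ x in D, ⟪gradient φ x, gradient ψ x⟫ = lam * ∫ x in D, φ x * ψ x

/-- `lam` is the second Neumann eigenvalue of `D`: the smallest positive number
admitting a weak Neumann eigenfunction on `D`. -/
def IsSecondNeumannEigenvalue (D : Set Plane) (lam : ℝ) : Prop :=
  0 < lam ∧ (∃ φ, IsWeakNeumannEF D lam φ) ∧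
  ∀ μ : ℝ, 0 < μ → (∃ φ, IsWeakNeumannEF D μ φ) → lam ≤ μ

/-- The eigenvalue `lam` is simple on `D`: any two weak Neumann eigenfunctions with
eigenvalue `lam` are scalar multiples of each other. -/
def NeumannSimple (D : Set Plane) (lam : ℝ) : Prop :=
  ∀ φ₁ φ₂, IsWeakNeumannEF D lam φ₁ → IsWeakNeumannEF D lam φ₂ →
    ∃ c : ℝ, ∀ x ∈ closure D, φ₂ x = c * φ₁ x

/-- `C` is a polygonal Jordan arc from `p` to `q` all of whose consecutive segments
make angles of absolute value at most `θ`. -/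
def IsPolygonalJordanArc (C : Set Plane) (p q : Plane) (θ : ℝ) : Prop :=
  ∃ n : ℕ, 0 < n ∧ ∃ v : Fin (n + 1) → Plane,
    v 0 = p ∧ v (Fin.last n) = q ∧
    C = ⋃ i : Fin n, segment ℝ (v i.castSucc) (v i.succ) ∧
    (∀ i : Fin n, v i.castSucc ≠ v i.succ) ∧
    (∀ i j : Fin n, (i : ℕ) + 1 < (j : ℕ) →
      Disjoint (segment ℝ (v i.castSucc) (v i.succ)) (segment ℝ (v j.castSucc) (v j.succ))) ∧
    (∀ i j : Fin n, (i : ℕ) + 1 = (j : ℕ) →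
      segment ℝ (v i.castSucc) (v i.succ) ∩ segment ℝ (v j.castSucc) (v j.succ)
        = {v j.castSucc}) ∧
    (∀ i : ℕ, ∀ _ : i + 2 ≤ n,
      |ang2 (v ⟨i + 1, by omega⟩ - v ⟨i, by omega⟩)
            (v ⟨i + 2, by omega⟩ - v ⟨i + 1, by omega⟩)| ≤ θ)

/-- Reflection across the horizontal line {x₂ = −1}. -/
def refH (x : Plane) : Plane := pt (x 0) (-2 - x 1)

/-- Reflection across the vertical line {x₁ = 0}. -/
def refV (x : Plane) : Plane := pt (-(x 0)) (x 1)

/-- The open convex polygon A₁ with consecutive vertices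
(0,−ε), (0,ε), (1,2ε), (2,ε₀), (2,−ε₀), (1,−2ε). -/
def hexagon (ε ε₀ : ℝ) : Set Plane :=
  interior (convexHull ℝ
    {pt 0 (-ε), pt 0 ε, pt 1 (2 * ε), pt 2 ε₀, pt 2 (-ε₀), pt 1 (-2 * ε)})

/-- `D` is an admissible domain `D(ε,ε₀)`. -/
def IsAdmissibleDomain (ε ε₀ : ℝ) (D : Set Plane) : Prop :=
  ∃ C₁ C₂ A₂ : Set Plane,
    IsPolygonalJordanArc C₁ (pt 2 ε₀) (pt (3 + ε₀) (-1)) ε₀ ∧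
    C₁ ⊆ (ball (pt 2 (-1)) (1 + 2 * ε₀) \ ball (pt 2 (-1)) (1 + ε₀ / 2)) ∩
      {x : Plane | 2 ≤ x 0 ∧ -1 ≤ x 1} ∧
    IsPolygonalJordanArc C₂ (pt 2 (-ε₀)) (pt (3 - ε₀) (-1)) ε₀ ∧
    C₂ ⊆ (ball (pt 2 (-1)) (1 - ε₀ / 2) \ ball (pt 2 (-1)) (1 - 2 * ε₀)) ∩
      {x : Plane | 2 ≤ x 0 ∧ -1 ≤ x 1} ∧
    IsOpen A₂ ∧ IsConnected A₂ ∧ Bornology.IsBounded A₂ ∧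
    frontier A₂ = C₁ ∪ C₂ ∪ segment ℝ (pt 2 ε₀) (pt 2 (-ε₀)) ∪
      segment ℝ (pt (3 + ε₀) (-1)) (pt (3 - ε₀) (-1)) ∧
    D = interior (closure ((hexagon ε ε₀ ∪ A₂) ∪ refH '' (hexagon ε ε₀ ∪ A₂) ∪
      refV '' (hexagon ε ε₀ ∪ A₂) ∪ refV '' (refH '' (hexagon ε ε₀ ∪ A₂))))

/-- The quarter domain D₁ = {x ∈ D : x₁ > 0, x₂ > −1}. -/
def subD1 (D : Set Plane) : Set Plane := {x ∈ D | 0 < x 0 ∧ -1 < x 1}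

/-- ∂ᵈD₁, the Dirichlet part of the boundary of D₁. -/
def dBdry (D₁ : Set Plane) : Set Plane := {x ∈ frontier D₁ | x 1 = -1}

/-- ∂ˡD₁, the part of the boundary of D₁ on the vertical axis. -/
def lBdry (D₁ : Set Plane) : Set Plane := {x ∈ frontier D₁ | x 0 = 0}

/-- ∂ˢD₁ = ∂D₁ \ (∂ᵈD₁ ∪ ∂ˡD₁). -/
def sBdry (D₁ : Set Plane) : Set Plane := frontier D₁ \ (dBdry D₁ ∪ lBdry D₁)

/-- A ground-state mixed eigenfunction on `D₁` with eigenvalue `lam`. -/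
def IsGroundStateMixedEF (D₁ : Set Plane) (lam : ℝ) (φ : Plane → ℝ) : Prop :=
  ContinuousOn φ (closure D₁) ∧
  ContDiffOn ℝ 1 φ D₁ ∧
  IntegrableOn (fun x => ‖gradient φ x‖ ^ 2) D₁ ∧
  (∀ x ∈ dBdry D₁, φ x = 0) ∧
  (∀ x ∈ D₁, 0 < φ x) ∧
  ∀ ψ : Plane → ℝ, ContDiff ℝ (⊤ : ℕ∞) ψ → Disjoint (tsupport ψ) (dBdry D₁) →
    ∫ x in D₁, ⟪gradient φ x, gradient ψ x⟫ = lam * ∫ x in D₁, φ x * ψ x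

/-- ρ(z): the infimum of lengths of Jordan arcs contained in the closure of `D₁`
joining `z` to ∂ᵈD₁. -/
def rho (D₁ : Set Plane) (z : Plane) : ℝ≥0∞ :=
  sInf {l : ℝ≥0∞ | ∃ γ : ℝ → Plane, ContinuousOn γ (Icc 0 1) ∧ InjOn γ (Icc 0 1) ∧
    γ 0 = z ∧ γ 1 ∈ dBdry D₁ ∧ MapsTo γ (Icc 0 1) (closure D₁) ∧
    l = eVariationOn γ (Icc 0 1)}

/-- The Laplacian Δφ = ∂²φ/∂x₁² + ∂²φ/∂x₂² of a function on the plane. -/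
def planeLaplacian (φ : Plane → ℝ) (x : Plane) : ℝ :=
  fderiv ℝ (fun y => fderiv ℝ φ y (EuclideanSpace.single (0 : Fin 2) (1 : ℝ))) x
      (EuclideanSpace.single (0 : Fin 2) (1 : ℝ)) +
  fderiv ℝ (fun y => fderiv ℝ φ y (EuclideanSpace.single (1 : Fin 2) (1 : ℝ))) x
      (EuclideanSpace.single (1 : Fin 2) (1 : ℝ))

namespace UCP

def E0 : Plane := EuclideanSpace.single (0 : Fin 2) (1 : ℝ)
def E1 : Plane := EuclideanSpace.single (1 : Fin 2) (1 : ℝ)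

def edir (θ : ℝ) : Plane := Real.cos θ • E0 + Real.sin θ • E1

lemma edir_apply0 (θ : ℝ) : edir θ 0 = Real.cos θ := by
  simp [edir, E0, E1, EuclideanSpace.single_apply]

lemma edir_apply1 (θ : ℝ) : edir θ 1 = Real.sin θ := by
  simp [edir, E0, E1, EuclideanSpace.single_apply]

lemma norm_edir (θ : ℝ) : ‖edir θ‖ = 1 := by
  rw [EuclideanSpace.norm_eq]
  rw [Fin.sum_univ_two]
  rw [edir_apply0, edir_apply1]
  rw [show ‖Real.cos θ‖ ^ 2 + ‖Real.sin θ‖ ^ 2 = 1 by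
    rw [Real.norm_eq_abs, Real.norm_eq_abs, sq_abs, sq_abs]; exact Real.cos_sq_add_sin_sq θ]
  exact Real.sqrt_one

lemma hasDerivAt_edir (θ : ℝ) : HasDerivAt edir (edir (θ + π/2)) θ := by
  have h0 : HasDerivAt (fun t => Real.cos t • E0 + Real.sin t • E1)
      ((-Real.sin θ) • E0 + Real.cos θ • E1) θ :=
    ((Real.hasDerivAt_cos θ).smul_const E0).add ((Real.hasDerivAt_sin θ).smul_const E1)
  convert h0 using 1
  · rfl
  rw [edir, Real.cos_add_pi_div_two, Real.sin_add_pi_div_two]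

lemma edir_add_pi (θ : ℝ) : edir (θ + π) = - edir θ := by
  rw [edir, edir, Real.cos_add_pi, Real.sin_add_pi]
  module

lemma hasDerivAt_edir_shift (c θ : ℝ) :
    HasDerivAt (fun ψ => edir (ψ + c)) (edir (θ + c + π/2)) θ := by
  have h0 : HasDerivAt (fun t : ℝ => t + c) 1 θ := (hasDerivAt_id θ).add_const c
  have h1 := (hasDerivAt_edir (θ + c)).scomp θ h0
  rw [one_smul] at h1
  exact h1

lemma edir_periodic : Function.Periodic edir (2 * π) := by
  intro θ
  rw [edir, edir, Real.cos_add_two_pi, Real.sin_add_two_pi]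


namespace Core

variable {D : Set Plane} {u : Plane → ℝ}

/-- abbreviations -/
def X (q : Plane) (r θ : ℝ) : Plane := q + r • edir θ

lemma dist_X (q : Plane) (r θ : ℝ) : dist (X q r θ) q = |r| := by
  rw [X, dist_eq_norm, add_sub_cancel_left, norm_smul, norm_edir, mul_one, Real.norm_eq_abs]

lemma contDiff_hyp (hD : IsOpen D) (hu : ContDiffOn ℝ 2 u D) :
    (∀ x ∈ D, DifferentiableAt ℝ u x) ∧
    (∀ x ∈ D, DifferentiableAt ℝ (fderiv ℝ u) x) ∧
    ContinuousOn u D ∧ ContinuousOn (fderiv ℝ u) D ∧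
    ContinuousOn (fderiv ℝ (fderiv ℝ u)) D := by
  have h1 : ContDiffOn ℝ 1 (fderiv ℝ u) D := hu.fderiv_of_isOpen hD (by norm_num)
  refine ⟨fun x hx => ?_, fun x hx => ?_, hu.continuousOn, h1.continuousOn, ?_⟩
  · exact (hu.differentiableOn (by norm_num)).differentiableAt (hD.mem_nhds hx)
  · exact (h1.differentiableOn (by norm_num)).differentiableAt (hD.mem_nhds hx)
  · exact (h1.fderiv_of_isOpen (m := 0) hD (by norm_num)).continuousOn

section PointwiseDerivs

variable (hD : IsOpen D) (hu : ContDiffOn ℝ 2 u D) {q : Plane} {r θ : ℝ}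
  (hx : X q r θ ∈ D)
include hD hu hx

lemma hasDerivAt_r :
    HasDerivAt (fun s => u (X q s θ)) (fderiv ℝ u (X q r θ) (edir θ)) r := by
  have hline : HasDerivAt (fun s : ℝ => X q s θ) (edir θ) r := by
    simpa [X] using ((hasDerivAt_id r).smul_const (edir θ)).const_add q
  exact (((contDiff_hyp hD hu).1 _ hx).hasFDerivAt).comp_hasDerivAt r hline

lemma hasDerivAt_rr :
    HasDerivAt (fun s => fderiv ℝ u (X q s θ) (edir θ))
      (fderiv ℝ (fderiv ℝ u) (X q r θ) (edir θ) (edir θ)) r := by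
  have hline : HasDerivAt (fun s : ℝ => X q s θ) (edir θ) r := by
    simpa [X] using ((hasDerivAt_id r).smul_const (edir θ)).const_add q
  have h1 : HasDerivAt (fun s => fderiv ℝ u (X q s θ))
      (fderiv ℝ (fderiv ℝ u) (X q r θ) (edir θ)) r :=
    (((contDiff_hyp hD hu).2.1 _ hx).hasFDerivAt).comp_hasDerivAt r hline
  simpa using h1.clm_apply (hasDerivAt_const r (edir θ))

lemma hasDerivAt_theta :
    HasDerivAt (fun ψ => u (X q r ψ)) (fderiv ℝ u (X q r θ) (r • edir (θ + π/2))) θ := by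
  have hcirc : HasDerivAt (fun ψ : ℝ => X q r ψ) (r • edir (θ + π/2)) θ :=
    (((hasDerivAt_edir θ).const_smul r)).const_add q
  exact (((contDiff_hyp hD hu).1 _ hx).hasFDerivAt).comp_hasDerivAt θ hcirc

lemma hasDerivAt_thetatheta :
    HasDerivAt (fun ψ => fderiv ℝ u (X q r ψ) (r • edir (ψ + π/2)))
      (fderiv ℝ (fderiv ℝ u) (X q r θ) (r • edir (θ + π/2)) (r • edir (θ + π/2))
        + fderiv ℝ u (X q r θ) (r • edir (θ + π))) θ := by
  have hcirc : HasDerivAt (fun ψ : ℝ => X q r ψ) (r • edir (θ + π/2)) θ :=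
    (((hasDerivAt_edir θ).const_smul r)).const_add q
  have h1 : HasDerivAt (fun ψ => fderiv ℝ u (X q r ψ))
      (fderiv ℝ (fderiv ℝ u) (X q r θ) (r • edir (θ + π/2))) θ :=
    (((contDiff_hyp hD hu).2.1 _ hx).hasFDerivAt).comp_hasDerivAt θ hcirc
  have h2 : HasDerivAt (fun ψ : ℝ => r • edir (ψ + π/2)) (r • edir (θ + π)) θ := by
    have h3 := (hasDerivAt_edir_shift (π/2) θ).const_smul r
    rw [show θ + π/2 + π/2 = θ + π by ring] at h3
    exact h3
  simpa using h1.clm_apply h2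

lemma lap_eq_polar :
    planeLaplacian u (X q r θ)
      = fderiv ℝ (fderiv ℝ u) (X q r θ) (edir θ) (edir θ)
        + fderiv ℝ (fderiv ℝ u) (X q r θ) (edir (θ + π/2)) (edir (θ + π/2)) := by
  set x := X q r θ
  set B := fderiv ℝ (fderiv ℝ u) x with hB
  have hdiff : DifferentiableAt ℝ (fderiv ℝ u) x := (contDiff_hyp hD hu).2.1 _ hx
  have key : ∀ v : Plane, fderiv ℝ (fun y => fderiv ℝ u y v) x = B.flip v := by
    intro v
    rw [fderiv_clm_apply hdiff (differentiableAt_const v)]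
    simp
    rfl
  have hlap : planeLaplacian u x = B E0 E0 + B E1 E1 := by
    rw [planeLaplacian]
    rw [key, key]
    rfl
  rw [hlap]
  rw [edir, edir, Real.cos_add_pi_div_two, Real.sin_add_pi_div_two]
  have hexp : ∀ a b : ℝ, B (a • E0 + b • E1) (a • E0 + b • E1)
      = a * (a * B E0 E0) + a * (b * B E0 E1) + (b * (a * B E1 E0) + b * (b * B E1 E1)) := by
    intro a b
    simp [map_add, _root_.map_smul, smul_eq_mul]
    ring
  rw [hexp, hexp]
  have hcs := Real.sin_sq_add_cos_sq θ
  linear_combination (-((B E0) E0) - (B E1) E1) * hcs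

end PointwiseDerivs


/-! ### The complex exponential weight -/

def w (n : ℤ) (θ : ℝ) : ℂ := Complex.exp ((-(n : ℂ) * Complex.I) * θ)

lemma hasDerivAt_w (n : ℤ) (θ : ℝ) :
    HasDerivAt (w n) ((-(n : ℂ) * Complex.I) * w n θ) θ := by
  have h1 : HasDerivAt (fun t : ℝ => ((t : ℝ) : ℂ)) 1 θ := (hasDerivAt_id θ).ofReal_comp
  have h2 : HasDerivAt (fun t : ℝ => (-(n : ℂ) * Complex.I) * (t : ℂ))
      (-(n : ℂ) * Complex.I) θ := by simpa using h1.const_mul (-(n : ℂ) * Complex.I)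
  unfold w
  simpa [mul_comm, mul_left_comm, mul_assoc] using h2.cexp

lemma continuous_w (n : ℤ) : Continuous (w n) := by
  exact (continuous_const.mul Complex.continuous_ofReal).cexp

lemma norm_w (n : ℤ) (θ : ℝ) : ‖w n θ‖ = 1 := by
  rw [w, show (-(n : ℂ) * Complex.I) * (θ : ℂ) = ((-n * θ : ℝ) : ℂ) * Complex.I by
    push_cast; ring]
  exact Complex.norm_exp_ofReal_mul_I _

lemma w_periodic (n : ℤ) : Function.Periodic (w n) (2 * π) := by
  intro θ
  rw [w, w, Complex.ofReal_add, mul_add, Complex.exp_add]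
  have : Complex.exp (-(n : ℂ) * Complex.I * ((2 * π : ℝ) : ℂ)) = 1 := by
    rw [show -(n : ℂ) * Complex.I * ((2 * π : ℝ) : ℂ) = (-n : ℤ) * (2 * π * Complex.I) by
      push_cast; ring]
    exact Complex.exp_int_mul_two_pi_mul_I (-n)
  rw [this, mul_one]

/-! ### Continuity helpers -/

lemma continuous_edir : Continuous edir :=
  (Real.continuous_cos.smul continuous_const).add (Real.continuous_sin.smul continuous_const)

section Cont

variable {q : Plane} {r : ℝ} {R : ℝ}

lemma continuous_X_theta (q : Plane) (r : ℝ) : Continuous (fun θ => X q r θ) :=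
  continuous_const.add (continuous_const.fun_smul continuous_edir)

lemma X_mem_ball (q : Plane) {r : ℝ} (hr : |r| < R) (θ : ℝ) : X q r θ ∈ ball q R := by
  rw [mem_ball, dist_X]; exact hr

end Cont


/-! ### The polar functions -/

def G (u : Plane → ℝ) (q : Plane) (r θ : ℝ) : ℝ := u (X q r θ)

def Gr (u : Plane → ℝ) (q : Plane) (r θ : ℝ) : ℝ := fderiv ℝ u (X q r θ) (edir θ)

def Gt (u : Plane → ℝ) (q : Plane) (r θ : ℝ) : ℝ :=
  fderiv ℝ u (X q r θ) (r • edir (θ + π/2))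

def Grr (u : Plane → ℝ) (q : Plane) (r θ : ℝ) : ℝ :=
  fderiv ℝ (fderiv ℝ u) (X q r θ) (edir θ) (edir θ)

def Gtt (u : Plane → ℝ) (q : Plane) (r θ : ℝ) : ℝ :=
  fderiv ℝ (fderiv ℝ u) (X q r θ) (r • edir (θ + π/2)) (r • edir (θ + π/2))
    + fderiv ℝ u (X q r θ) (r • edir (θ + π))

section Polar

variable {D : Set Plane} {u : Plane → ℝ} {lam : ℝ} {q : Plane} {R : ℝ}
variable (hD : IsOpen D) (hu : ContDiffOn ℝ 2 u D)

include hD hu in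
/-- The PDE in polar coordinates. -/
lemma pde_polar (heq : ∀ x ∈ D, planeLaplacian u x + lam * u x = 0)
    {r θ : ℝ} (hr : r ≠ 0) (hx : X q r θ ∈ D) :
    Grr u q r θ = -lam * G u q r θ - (1/r) * Gr u q r θ - (1/r^2) * Gtt u q r θ := by
  have hlap := lap_eq_polar hD hu hx
  have hpde := heq _ hx
  have h1 : fderiv ℝ (fderiv ℝ u) (X q r θ) (r • edir (θ + π/2)) (r • edir (θ + π/2))
      = r^2 * fderiv ℝ (fderiv ℝ u) (X q r θ) (edir (θ + π/2)) (edir (θ + π/2)) := by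
    simp [_root_.map_smul, smul_eq_mul]
    ring
  have h2 : fderiv ℝ u (X q r θ) (r • edir (θ + π)) = -r * Gr u q r θ := by
    rw [edir_add_pi, Gr]
    simp [_root_.map_smul, smul_eq_mul]
  have h3 : Gtt u q r θ = r^2 * fderiv ℝ (fderiv ℝ u) (X q r θ) (edir (θ + π/2)) (edir (θ + π/2))
      - r * Gr u q r θ := by
    rw [Gtt, h1, h2]; ring
  have key : fderiv ℝ (fderiv ℝ u) (X q r θ) (edir θ) (edir θ)
      = -lam * G u q r θ
        - fderiv ℝ (fderiv ℝ u) (X q r θ) (edir (θ + π/2)) (edir (θ + π/2)) := by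
    rw [G, X]; rw [X] at hlap hpde; linarith
  rw [Grr, key, h3]
  field_simp
  ring

/-- Periodicity in θ. -/
lemma G_periodic (r : ℝ) : Function.Periodic (G u q r) (2 * π) := fun θ => by
  rw [G, G, X, X, edir_periodic]

lemma Gt_periodic (r : ℝ) : Function.Periodic (Gt u q r) (2 * π) := fun θ => by
  have h1 : θ + 2*π + π/2 = (θ + π/2) + 2*π := by ring
  rw [Gt, Gt, X, X, edir_periodic, h1, edir_periodic]

/-! Continuity in θ for fixed radius -/

variable (hball : ball q R ⊆ D)

include hD hu hball

lemma contG_theta {r : ℝ} (hr : |r| < R) : Continuous (fun θ => G u q r θ) :=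
  (contDiff_hyp hD hu).2.2.1.comp_continuous (continuous_X_theta q r)
    (fun θ => hball (X_mem_ball q hr θ))

lemma contGr_theta {r : ℝ} (hr : |r| < R) : Continuous (fun θ => Gr u q r θ) :=
  (((contDiff_hyp hD hu).2.2.2.1.comp_continuous (continuous_X_theta q r)
    (fun θ => hball (X_mem_ball q hr θ)))).clm_apply continuous_edir

lemma contGt_theta {r : ℝ} (hr : |r| < R) : Continuous (fun θ => Gt u q r θ) :=
  (((contDiff_hyp hD hu).2.2.2.1.comp_continuous (continuous_X_theta q r)
    (fun θ => hball (X_mem_ball q hr θ)))).clm_apply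
    (continuous_const.fun_smul (continuous_edir.comp (continuous_id.fun_add continuous_const)))

lemma contGrr_theta {r : ℝ} (hr : |r| < R) : Continuous (fun θ => Grr u q r θ) :=
  ((((contDiff_hyp hD hu).2.2.2.2.comp_continuous (continuous_X_theta q r)
    (fun θ => hball (X_mem_ball q hr θ)))).clm_apply continuous_edir).clm_apply continuous_edir

lemma contGtt_theta {r : ℝ} (hr : |r| < R) : Continuous (fun θ => Gtt u q r θ) := by
  have hv : Continuous (fun θ : ℝ => r • edir (θ + π/2)) :=
    continuous_const.fun_smul (continuous_edir.comp (continuous_id.fun_add continuous_const))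
  have hv2 : Continuous (fun θ : ℝ => r • edir (θ + π)) :=
    continuous_const.fun_smul (continuous_edir.comp (continuous_id.fun_add continuous_const))
  exact (((((contDiff_hyp hD hu).2.2.2.2.comp_continuous (continuous_X_theta q r)
    (fun θ => hball (X_mem_ball q hr θ)))).clm_apply hv).clm_apply hv).add
    ((((contDiff_hyp hD hu).2.2.2.1.comp_continuous (continuous_X_theta q r)
    (fun θ => hball (X_mem_ball q hr θ)))).clm_apply hv2)

end Polar


/-! ### The Fourier coefficient functions -/

def AF (u : Plane → ℝ) (q : Plane) (n : ℤ) (r : ℝ) : ℂ :=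
  ∫ θ in (0:ℝ)..(2*π), w n θ * (G u q r θ : ℂ)

def AF' (u : Plane → ℝ) (q : Plane) (n : ℤ) (r : ℝ) : ℂ :=
  ∫ θ in (0:ℝ)..(2*π), w n θ * (Gr u q r θ : ℂ)

def AF'' (u : Plane → ℝ) (q : Plane) (n : ℤ) (r : ℝ) : ℂ :=
  ∫ θ in (0:ℝ)..(2*π), w n θ * (Grr u q r θ : ℂ)

section Deriv

variable {D : Set Plane} {u : Plane → ℝ} {q : Plane} {R : ℝ}
variable (hD : IsOpen D) (hu : ContDiffOn ℝ 2 u D) (hball : ball q R ⊆ D)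

include hD hu hball in
lemma hasDerivAt_AF (n : ℤ) {r₀ : ℝ} (hr₀ : r₀ ∈ Ioo 0 R) :
    HasDerivAt (AF u q n) (AF' u q n r₀) r₀ ∧
      HasDerivAt (AF' u q n) (AF'' u q n r₀) r₀ := by
  obtain ⟨hr₀0, hr₀R⟩ := hr₀
  set b := (r₀ + R)/2 with hb
  set δ := min r₀ ((R - r₀)/2) with hδ
  have hδpos : 0 < δ := lt_min hr₀0 (by linarith)
  have hbR : b < R := by rw [hb]; linarith
  have hsubD : closedBall q b ⊆ D :=
    (closedBall_subset_ball hbR).trans hball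
  have hmem : ∀ x ∈ ball r₀ δ, ∀ t : ℝ, X q x t ∈ closedBall q b := by
    intro x hx t
    rw [mem_ball, Real.dist_eq] at hx
    rw [mem_closedBall, dist_X]
    have h1 : δ ≤ r₀ := min_le_left _ _
    have h2 : δ ≤ (R - r₀)/2 := min_le_right _ _
    rw [abs_lt] at hx
    rw [abs_le]
    constructor <;> [skip; skip] <;> rw [hb] <;> linarith
  have hmemD : ∀ x ∈ ball r₀ δ, ∀ t : ℝ, X q x t ∈ D := fun x hx t => hsubD (hmem x hx t)
  have hxR : ∀ x ∈ ball r₀ δ, |x| < R := by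
    intro x hx
    rw [mem_ball, Real.dist_eq, abs_lt] at hx
    have h1 : δ ≤ r₀ := min_le_left _ _
    have h2 : δ ≤ (R - r₀)/2 := min_le_right _ _
    rw [abs_lt]
    constructor <;> linarith
  have hr₀mem : r₀ ∈ ball r₀ δ := mem_ball_self hδpos
  -- bounds
  obtain ⟨M₁, hM₁⟩ := (isCompact_closedBall q b).exists_bound_of_continuousOn
    ((contDiff_hyp hD hu).2.2.2.1.mono hsubD)
  obtain ⟨M₂, hM₂⟩ := (isCompact_closedBall q b).exists_bound_of_continuousOn
    (f := fderiv ℝ (fderiv ℝ u))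
    ((contDiff_hyp hD hu).2.2.2.2.mono hsubD)
  have hGr_le : ∀ x ∈ ball r₀ δ, ∀ t : ℝ, ‖w n t * (Gr u q x t : ℂ)‖ ≤ M₁ := by
    intro x hx t
    rw [norm_mul, norm_w, one_mul, Complex.norm_real, Real.norm_eq_abs, Gr]
    calc |fderiv ℝ u (X q x t) (edir t)| ≤ ‖fderiv ℝ u (X q x t)‖ * ‖edir t‖ :=
          (fderiv ℝ u (X q x t)).le_opNorm (edir t)
      _ ≤ M₁ := by rw [norm_edir, mul_one]; exact hM₁ _ (hmem x hx t)
  have hGrr_le : ∀ x ∈ ball r₀ δ, ∀ t : ℝ, ‖w n t * (Grr u q x t : ℂ)‖ ≤ M₂ := by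
    intro x hx t
    rw [norm_mul, norm_w, one_mul, Complex.norm_real, Real.norm_eq_abs, Grr]
    calc |fderiv ℝ (fderiv ℝ u) (X q x t) (edir t) (edir t)|
        ≤ ‖fderiv ℝ (fderiv ℝ u) (X q x t) (edir t)‖ * ‖edir t‖ := by
          rw [← Real.norm_eq_abs]
          exact ContinuousLinearMap.le_opNorm _ _
      _ ≤ ‖fderiv ℝ (fderiv ℝ u) (X q x t)‖ * ‖edir t‖ * ‖edir t‖ := by
          gcongr
          exact ContinuousLinearMap.le_opNorm _ _
      _ ≤ M₂ := by rw [norm_edir, mul_one, mul_one]; exact hM₂ _ (hmem x hx t)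
  constructor
  · have := intervalIntegral.hasDerivAt_integral_of_dominated_loc_of_deriv_le
      (F := fun x t => w n t * (G u q x t : ℂ)) (F' := fun x t => w n t * (Gr u q x t : ℂ))
      (bound := fun _ => M₁) (a := 0) (b := 2*π) (μ := MeasureTheory.volume) (x₀ := r₀) (ball_mem_nhds r₀ hδpos)
      ?_ ?_ ?_ ?_ ?_ ?_
    · exact this.2
    · filter_upwards [ball_mem_nhds r₀ hδpos] with x hx
      exact (((continuous_w n).mul (Complex.continuous_ofReal.comp
        (contG_theta hD hu hball (hxR x hx)))).aestronglyMeasurable)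
    · exact (((continuous_w n).mul (Complex.continuous_ofReal.comp
        (contG_theta hD hu hball (hxR r₀ hr₀mem)))).intervalIntegrable _ _)
    · exact (((continuous_w n).mul (Complex.continuous_ofReal.comp
        (contGr_theta hD hu hball (hxR r₀ hr₀mem)))).aestronglyMeasurable)
    · exact Filter.Eventually.of_forall (fun t _ x hx => hGr_le x hx t)
    · exact intervalIntegrable_const
    · refine Filter.Eventually.of_forall (fun t _ x hx => ?_)
      exact ((hasDerivAt_r hD hu (hmemD x hx t)).ofReal_comp).const_mul (w n t)
  · have := intervalIntegral.hasDerivAt_integral_of_dominated_loc_of_deriv_le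
      (F := fun x t => w n t * (Gr u q x t : ℂ)) (F' := fun x t => w n t * (Grr u q x t : ℂ))
      (bound := fun _ => M₂) (a := 0) (b := 2*π) (μ := MeasureTheory.volume) (x₀ := r₀) (ball_mem_nhds r₀ hδpos)
      ?_ ?_ ?_ ?_ ?_ ?_
    · exact this.2
    · filter_upwards [ball_mem_nhds r₀ hδpos] with x hx
      exact (((continuous_w n).mul (Complex.continuous_ofReal.comp
        (contGr_theta hD hu hball (hxR x hx)))).aestronglyMeasurable)
    · exact (((continuous_w n).mul (Complex.continuous_ofReal.comp
        (contGr_theta hD hu hball (hxR r₀ hr₀mem)))).intervalIntegrable _ _)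
    · exact (((continuous_w n).mul (Complex.continuous_ofReal.comp
        (contGrr_theta hD hu hball (hxR r₀ hr₀mem)))).aestronglyMeasurable)
    · exact Filter.Eventually.of_forall (fun t _ x hx => hGrr_le x hx t)
    · exact intervalIntegrable_const
    · refine Filter.Eventually.of_forall (fun t _ x hx => ?_)
      exact ((hasDerivAt_rr hD hu (hmemD x hx t)).ofReal_comp).const_mul (w n t)

include hD hu hball in
lemma AF_tt (n : ℤ) {r : ℝ} (hr : r ∈ Ioo 0 R) :
    ∫ θ in (0:ℝ)..(2*π), w n θ * (Gtt u q r θ : ℂ) = -(n:ℂ)^2 * AF u q n r := by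
  obtain ⟨hr0, hrR⟩ := hr
  have hrR' : |r| < R := by rw [abs_lt]; constructor <;> linarith
  have hmemD : ∀ θ : ℝ, X q r θ ∈ D := fun θ => hball (X_mem_ball q hrR' θ)
  set c : ℂ := -(n:ℂ) * Complex.I with hc
  have hw : ∀ x ∈ Set.uIcc (0:ℝ) (2*π), HasDerivAt (w n) (c * w n x) x :=
    fun x _ => hasDerivAt_w n x
  have hwb : w n (2*π) = w n 0 := by simpa using (w_periodic n 0)
  -- step 1 : ∫ w ⬝ Gtt = - c ∫ w ⬝ Gt
  have step1 : ∫ θ in (0:ℝ)..(2*π), w n θ * (Gtt u q r θ : ℂ)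
      = - (c * ∫ θ in (0:ℝ)..(2*π), w n θ * (Gt u q r θ : ℂ)) := by
    have hv : ∀ x ∈ Set.uIcc (0:ℝ) (2*π),
        HasDerivAt (fun θ => (Gt u q r θ : ℂ)) ((Gtt u q r x : ℂ)) x := by
      intro x _
      exact (hasDerivAt_thetatheta hD hu (hmemD x)).ofReal_comp
    have := intervalIntegral.integral_mul_deriv_eq_deriv_mul hw hv
      ((continuous_const.mul (continuous_w n)).intervalIntegrable _ _)
      ((Complex.continuous_ofReal.comp
        (contGtt_theta hD hu hball hrR')).intervalIntegrable _ _)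
    rw [this, hwb]
    have hGtb : (Gt u q r (2*π) : ℂ) = (Gt u q r 0 : ℂ) := by
      norm_cast
      simpa using (Gt_periodic (u := u) (q := q) r 0)
    rw [hGtb]
    rw [show ∫ θ in (0:ℝ)..(2*π), c * w n θ * (Gt u q r θ : ℂ)
        = c * ∫ θ in (0:ℝ)..(2*π), w n θ * (Gt u q r θ : ℂ) by
      rw [← intervalIntegral.integral_const_mul]
      congr 1; ext θ; ring]
    ring
  -- step 2 : ∫ w ⬝ Gt = - c ∫ w ⬝ G
  have step2 : ∫ θ in (0:ℝ)..(2*π), w n θ * (Gt u q r θ : ℂ)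
      = - (c * AF u q n r) := by
    have hv : ∀ x ∈ Set.uIcc (0:ℝ) (2*π),
        HasDerivAt (fun θ => (G u q r θ : ℂ)) ((Gt u q r x : ℂ)) x := by
      intro x _
      exact (hasDerivAt_theta hD hu (hmemD x)).ofReal_comp
    have := intervalIntegral.integral_mul_deriv_eq_deriv_mul hw hv
      ((continuous_const.mul (continuous_w n)).intervalIntegrable _ _)
      ((Complex.continuous_ofReal.comp
        (contGt_theta hD hu hball hrR')).intervalIntegrable _ _)
    rw [this, hwb]
    have hGb : (G u q r (2*π) : ℂ) = (G u q r 0 : ℂ) := by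
      norm_cast
      simpa using (G_periodic (u := u) (q := q) r 0)
    rw [hGb]
    rw [show ∫ θ in (0:ℝ)..(2*π), c * w n θ * (G u q r θ : ℂ)
        = c * ∫ θ in (0:ℝ)..(2*π), w n θ * (G u q r θ : ℂ) by
      rw [← intervalIntegral.integral_const_mul]
      congr 1; ext θ; ring]
    rw [AF]
    ring
  rw [step1, step2, hc]
  rw [AF]
  ring_nf
  rw [Complex.I_sq]
  ring

include hD hu hball in
lemma AF_ode {lam : ℝ} (heq : ∀ x ∈ D, planeLaplacian u x + lam * u x = 0)
    (n : ℤ) {r : ℝ} (hr : r ∈ Ioo 0 R) :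
    AF'' u q n r = -(1/(r:ℂ)) * AF' u q n r - ((lam:ℂ) - (n:ℂ)^2/(r:ℂ)^2) * AF u q n r := by
  obtain ⟨hr0, hrR⟩ := hr
  have hrR' : |r| < R := by rw [abs_lt]; constructor <;> linarith
  have hne : r ≠ 0 := ne_of_gt hr0
  have hmemD : ∀ θ : ℝ, X q r θ ∈ D := fun θ => hball (X_mem_ball q hrR' θ)
  have key : ∀ θ : ℝ, w n θ * (Grr u q r θ : ℂ)
      = -(lam:ℂ) * (w n θ * (G u q r θ : ℂ)) - (1/(r:ℂ)) * (w n θ * (Gr u q r θ : ℂ))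
        - (1/(r:ℂ)^2) * (w n θ * (Gtt u q r θ : ℂ)) := by
    intro θ
    rw [pde_polar hD hu heq hne (hmemD θ)]
    have hrc : (r:ℂ) ≠ 0 := by exact_mod_cast hne
    push_cast
    field_simp
  have iA : IntervalIntegrable (fun θ => -(lam:ℂ) * (w n θ * (G u q r θ : ℂ)))
      MeasureTheory.volume 0 (2*π) :=
    (continuous_const.mul ((continuous_w n).mul (Complex.continuous_ofReal.comp
      (contG_theta hD hu hball hrR')))).intervalIntegrable _ _
  have iB : IntervalIntegrable (fun θ => (1/(r:ℂ)) * (w n θ * (Gr u q r θ : ℂ)))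
      MeasureTheory.volume 0 (2*π) :=
    (continuous_const.mul ((continuous_w n).mul (Complex.continuous_ofReal.comp
      (contGr_theta hD hu hball hrR')))).intervalIntegrable _ _
  have iC : IntervalIntegrable (fun θ => (1/(r:ℂ)^2) * (w n θ * (Gtt u q r θ : ℂ)))
      MeasureTheory.volume 0 (2*π) :=
    (continuous_const.mul ((continuous_w n).mul (Complex.continuous_ofReal.comp
      (contGtt_theta hD hu hball hrR')))).intervalIntegrable _ _
  have hAF : AF u q n r = ∫ θ in (0:ℝ)..(2*π), w n θ * (G u q r θ : ℂ) := rfl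
  have hAF' : AF' u q n r = ∫ θ in (0:ℝ)..(2*π), w n θ * (Gr u q r θ : ℂ) := rfl
  rw [AF'']
  calc ∫ θ in (0:ℝ)..(2*π), w n θ * (Grr u q r θ : ℂ)
      = ∫ θ in (0:ℝ)..(2*π),
          (-(lam:ℂ) * (w n θ * (G u q r θ : ℂ)) - (1/(r:ℂ)) * (w n θ * (Gr u q r θ : ℂ))
            - (1/(r:ℂ)^2) * (w n θ * (Gtt u q r θ : ℂ))) := by
        apply intervalIntegral.integral_congr
        intro θ _
        exact key θ
    _ = ((∫ θ in (0:ℝ)..(2*π), -(lam:ℂ) * (w n θ * (G u q r θ : ℂ)))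
          - ∫ θ in (0:ℝ)..(2*π), (1/(r:ℂ)) * (w n θ * (Gr u q r θ : ℂ)))
          - ∫ θ in (0:ℝ)..(2*π), (1/(r:ℂ)^2) * (w n θ * (Gtt u q r θ : ℂ)) := by
        rw [intervalIntegral.integral_sub (iA.sub iB) iC, intervalIntegral.integral_sub iA iB]
    _ = -(lam:ℂ) * AF u q n r - (1/(r:ℂ)) * AF' u q n r
          - (1/(r:ℂ)^2) * (-(n:ℂ)^2 * AF u q n r) := by
        rw [intervalIntegral.integral_const_mul, intervalIntegral.integral_const_mul,
          intervalIntegral.integral_const_mul, AF_tt hD hu hball n ⟨hr0, hrR⟩, hAF, hAF']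
    _ = -(1/(r:ℂ)) * AF' u q n r - ((lam:ℂ) - (n:ℂ)^2/(r:ℂ)^2) * AF u q n r := by
        have hrc : (r:ℂ) ≠ 0 := by exact_mod_cast hne
        field_simp
        ring

lemma AF_zero_small {ε : ℝ} (hz : ∀ x ∈ ball q ε, u x = 0)
    (n : ℤ) {r : ℝ} (hr : |r| < ε) :
    AF u q n r = 0 ∧ AF' u q n r = 0 := by
  have hmem : ∀ θ : ℝ, X q r θ ∈ ball q ε := fun θ => X_mem_ball q hr θ
  have hG : ∀ θ : ℝ, G u q r θ = 0 := fun θ => hz _ (hmem θ)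
  have hGr : ∀ θ : ℝ, Gr u q r θ = 0 := by
    intro θ
    have hev : u =ᶠ[nhds (X q r θ)] (fun _ => (0:ℝ)) := by
      filter_upwards [isOpen_ball.mem_nhds (hmem θ)] with y hy
      exact hz y hy
    rw [Gr, hev.fderiv_eq, fderiv_fun_const]
    simp
  constructor
  · rw [AF]
    rw [show (0:ℂ) = ∫ θ in (0:ℝ)..(2*π), (0:ℂ) by simp]
    apply intervalIntegral.integral_congr
    intro θ _
    simp only [hG θ]
    simp
  · rw [AF']
    rw [show (0:ℂ) = ∫ θ in (0:ℝ)..(2*π), (0:ℂ) by simp]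
    apply intervalIntegral.integral_congr
    intro θ _
    simp only [hGr θ]
    simp

include hD hu hball in
lemma AF_zero_all {lam : ℝ} (heq : ∀ x ∈ D, planeLaplacian u x + lam * u x = 0)
    {ε : ℝ} (hε : 0 < ε) (hεR : ε ≤ R) (hz : ∀ x ∈ ball q ε, u x = 0)
    (n : ℤ) {r : ℝ} (hr : r ∈ Ioo 0 R) :
    AF u q n r = 0 := by
  obtain ⟨hr0, hrR⟩ := hr
  by_cases hcase : r < ε
  · exact (AF_zero_small hz n (by rw [abs_lt]; constructor <;> linarith)).1
  push_neg at hcase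
  set a := ε/2 with ha
  have hapos : 0 < a := by positivity
  -- the ODE right-hand side
  set vf : ℝ → ℂ × ℂ → ℂ × ℂ := fun t y =>
    (y.2, -(1/((max t a : ℝ) : ℂ)) * y.2
      - ((lam:ℂ) - (n:ℂ)^2/((max t a : ℝ):ℂ)^2) * y.1) with hvf
  set Kr : ℝ := 1 + 2/ε + |lam| + (n:ℝ)^2 * (2/ε)^2 with hKr
  have hKrnn : 0 ≤ Kr := by positivity
  have hlip : ∀ t, LipschitzWith Kr.toNNReal (vf t) := by
    intro t
    apply LipschitzWith.of_dist_le_mul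
    intro y z
    have hmx : a ≤ max t a := le_max_right _ _
    have hmxpos : 0 < max t a := lt_of_lt_of_le hapos hmx
    set m : ℝ := max t a with hm
    have hmc : ((m:ℂ)) ≠ 0 := by
      simpa using ne_of_gt hmxpos
    have hd1 : dist (vf t y).1 (vf t z).1 = dist y.2 z.2 := rfl
    have hnorm1 : ‖(1/((m:ℝ):ℂ))‖ ≤ 2/ε := by
      rw [norm_div, norm_one, Complex.norm_real, Real.norm_eq_abs, abs_of_pos hmxpos]
      rw [div_le_div_iff₀ hmxpos hε]
      have : ε/2 ≤ m := hmx
      linarith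
    have hnorm2 : ‖(lam:ℂ) - (n:ℂ)^2/((m:ℝ):ℂ)^2‖ ≤ |lam| + (n:ℝ)^2 * (2/ε)^2 := by
      apply le_trans (norm_sub_le _ _)
      have h1 : ‖((lam:ℝ):ℂ)‖ = |lam| := by rw [Complex.norm_real, Real.norm_eq_abs]
      have h2 : ‖(n:ℂ)^2/((m:ℝ):ℂ)^2‖ ≤ (n:ℝ)^2 * (2/ε)^2 := by
        rw [norm_div, norm_pow, norm_pow, Complex.norm_real, Real.norm_eq_abs,
          abs_of_pos hmxpos]
        have hn : ‖(n:ℂ)‖ = |(n:ℝ)| := by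
          rw [show ((n:ℤ):ℂ) = (((n:ℤ):ℝ):ℂ) by push_cast; ring, Complex.norm_real,
            Real.norm_eq_abs]
        rw [hn]
        rw [div_le_iff₀ (by positivity)]
        have hm2 : (ε/2)^2 ≤ m^2 := by
          apply sq_le_sq'
          · nlinarith
          · exact hmx
        have hkey : (n:ℝ)^2 * (2/ε)^2 * (ε/2)^2 = (n:ℝ)^2 := by
          field_simp
        calc |(n:ℝ)|^2 = (n:ℝ)^2 := sq_abs _
          _ = (n:ℝ)^2 * (2/ε)^2 * (ε/2)^2 := hkey.symm
          _ ≤ (n:ℝ)^2 * (2/ε)^2 * m^2 :=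
              mul_le_mul_of_nonneg_left hm2 (by positivity)
      linarith [h1.le]
    have hd2 : dist (vf t y).2 (vf t z).2
        ≤ (2/ε) * dist y.2 z.2 + (|lam| + (n:ℝ)^2 * (2/ε)^2) * dist y.1 z.1 := by
      rw [dist_eq_norm]
      have hrw : (vf t y).2 - (vf t z).2
          = -(1/((m:ℝ):ℂ)) * (y.2 - z.2)
            - ((lam:ℂ) - (n:ℂ)^2/((m:ℝ):ℂ)^2) * (y.1 - z.1) := by
        simp only [hvf]
        ring
      rw [hrw]
      apply le_trans (norm_sub_le _ _)
      rw [norm_mul, norm_mul, norm_neg]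
      rw [dist_eq_norm, dist_eq_norm]
      have hy2 : (0:ℝ) ≤ ‖y.2 - z.2‖ := norm_nonneg _
      have hy1 : (0:ℝ) ≤ ‖y.1 - z.1‖ := norm_nonneg _
      have := mul_le_mul_of_nonneg_right hnorm1 hy2
      have := mul_le_mul_of_nonneg_right hnorm2 hy1
      linarith
    rw [Prod.dist_eq]
    rw [Real.coe_toNNReal _ hKrnn]
    have hdist1 : dist y.1 z.1 ≤ dist y z := by rw [Prod.dist_eq]; exact le_max_left _ _
    have hdist2 : dist y.2 z.2 ≤ dist y z := by rw [Prod.dist_eq]; exact le_max_right _ _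
    have hdnn : 0 ≤ dist y z := dist_nonneg
    have hKr1 : 1 ≤ Kr := by
      rw [hKr]
      have : (0:ℝ) ≤ 2/ε := by positivity
      have := abs_nonneg lam
      have : (0:ℝ) ≤ (n:ℝ)^2 * (2/ε)^2 := by positivity
      linarith
    apply max_le
    · rw [hd1]
      calc dist y.2 z.2 ≤ dist y z := hdist2
        _ = 1 * dist y z := (one_mul _).symm
        _ ≤ Kr * dist y z := mul_le_mul_of_nonneg_right hKr1 hdnn
    · apply le_trans hd2
      have h1 : (2/ε) * dist y.2 z.2 ≤ (2/ε) * dist y z :=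
        mul_le_mul_of_nonneg_left hdist2 (by positivity)
      have h2 : (|lam| + (n:ℝ)^2 * (2/ε)^2) * dist y.1 z.1
          ≤ (|lam| + (n:ℝ)^2 * (2/ε)^2) * dist y z :=
        mul_le_mul_of_nonneg_left hdist1 (by positivity)
      have h3 : (2/ε) * dist y z + (|lam| + (n:ℝ)^2 * (2/ε)^2) * dist y z ≤ Kr * dist y z := by
        rw [hKr]
        nlinarith [hdnn]
      linarith
  -- the two solutions
  set f : ℝ → ℂ × ℂ := fun t => (AF u q n t, AF' u q n t) with hf
  have hIoo : ∀ t ∈ Icc a r, t ∈ Ioo 0 R := by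
    intro t ht
    exact ⟨lt_of_lt_of_le hapos ht.1, lt_of_le_of_lt ht.2 hrR⟩
  have hfc : ContinuousOn f (Icc a r) := by
    intro t ht
    have h1 := (hasDerivAt_AF hD hu hball n (hIoo t ht)).1.continuousAt
    have h2 := (hasDerivAt_AF hD hu hball n (hIoo t ht)).2.continuousAt
    exact (h1.prodMk h2).continuousWithinAt
  have hf' : ∀ t ∈ Ico a r, HasDerivWithinAt f (vf t (f t)) (Ici t) t := by
    intro t ht
    have htIoo : t ∈ Ioo 0 R := hIoo t ⟨ht.1, le_of_lt ht.2⟩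
    have h1 := (hasDerivAt_AF hD hu hball n htIoo).1
    have h2 := (hasDerivAt_AF hD hu hball n htIoo).2
    have hmax : max t a = t := max_eq_left ht.1
    have hcomb : HasDerivAt f (AF' u q n t, AF'' u q n t) t := h1.prodMk h2
    have hval : vf t (f t) = (AF' u q n t, AF'' u q n t) := by
      simp only [hvf, hf, hmax]
      rw [AF_ode hD hu hball heq n htIoo]
    rw [hval]
    exact hcomb.hasDerivWithinAt
  have hg' : ∀ t ∈ Ico a r,
      HasDerivWithinAt (fun _ : ℝ => ((0:ℂ), (0:ℂ))) (vf t ((0:ℂ), (0:ℂ))) (Ici t) t := by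
    intro t ht
    have : vf t ((0:ℂ), (0:ℂ)) = ((0:ℂ), (0:ℂ)) := by
      simp [hvf]
    rw [this]
    exact (hasDerivAt_const t _).hasDerivWithinAt
  have hinit : f a = ((0:ℂ), (0:ℂ)) := by
    have hsmall := AF_zero_small (q := q) hz n (r := a)
      (by rw [abs_of_pos hapos]; rw [ha]; linarith)
    rw [hf]
    exact Prod.ext hsmall.1 hsmall.2
  have := ODE_solution_unique (v := vf) (K := Kr.toNNReal) (f := f)
    (g := fun _ => ((0:ℂ), (0:ℂ))) (a := a) (b := r) hlip hfc hf'
    continuousOn_const hg' hinit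
  have hrIcc : r ∈ Icc a r := by
    constructor
    · rw [ha]; linarith
    · exact le_refl r
  have := this hrIcc
  rw [hf] at this
  exact (Prod.ext_iff.1 this).1

end Deriv

/-! ### A continuous periodic function with vanishing Fourier coefficients is zero -/

open AddCircle in
lemma fourier_neg_eq_w (n : ℤ) (x : ℝ) :
    (fourier (-n) (x : AddCircle (2*π)) : ℂ) = w n x := by
  rw [fourier_coe_apply, w]
  congr 1
  have hπ : (π:ℂ) ≠ 0 := by exact_mod_cast Real.pi_ne_zero
  push_cast
  field_simp

open AddCircle in
lemma zero_of_fourier (h : ℝ → ℂ) (hcont : Continuous h)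
    (hper : Function.Periodic h (2*π))
    (hcoef : ∀ n : ℤ, ∫ θ in (0:ℝ)..(2*π), w n θ * h θ = 0) : ∀ θ, h θ = 0 := by
  have hT : Fact (0 < 2*π) := ⟨by positivity⟩
  have hlift : Continuous hper.lift := by
    apply continuous_coinduced_dom.mpr
    exact hcont
  set F : C(AddCircle (2*π), ℂ) := ⟨hper.lift, hlift⟩ with hF
  have hFcoe : ∀ x : ℝ, F (x : AddCircle (2*π)) = h x := fun x => hper.lift_coe x
  have hFcoeff : ∀ n : ℤ, fourierCoeff (F : AddCircle (2*π) → ℂ) n = 0 := by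
    intro n
    rw [fourierCoeff_eq_intervalIntegral _ n 0]
    rw [show (0:ℝ) + 2*π = 2*π by ring]
    rw [show ∫ x in (0:ℝ)..(2*π), fourier (-n) (x : AddCircle (2*π)) • F (x : AddCircle (2*π))
        = ∫ θ in (0:ℝ)..(2*π), w n θ * h θ by
      apply intervalIntegral.integral_congr
      intro x _
      simp only
      rw [smul_eq_mul, hFcoe x, fourier_neg_eq_w]]
    rw [hcoef n]
    simp
  set FL := ContinuousMap.toLp (E := ℂ) 2 haarAddCircle ℂ F with hFL
  have hrepr : ∀ n : ℤ, fourierBasis.repr FL n = 0 := by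
    intro n
    rw [fourierBasis_repr]
    rw [fourierCoeff_toLp]
    exact hFcoeff n
  have hFL0 : FL = 0 := by
    apply fourierBasis.repr.injective
    ext n
    rw [hrepr n]
    simp
  have hae : (F : AddCircle (2*π) → ℂ) =ᵐ[haarAddCircle] (fun _ => 0) := by
    have h1 := ContinuousMap.coeFn_toLp (p := 2) haarAddCircle (𝕜 := ℂ) F
    rw [← hFL, hFL0] at h1
    have h2 : ⇑(0 : MeasureTheory.Lp ℂ 2 (haarAddCircle (T := 2*π)))
        =ᵐ[haarAddCircle] (fun _ => 0) := MeasureTheory.Lp.coeFn_zero _ _ _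
    exact h1.symm.trans h2
  have hF0 : (F : AddCircle (2*π) → ℂ) = (fun _ => 0) :=
    (F.continuous.ae_eq_iff_eq haarAddCircle continuous_const).mp hae
  intro θ
  rw [← hFcoe θ, hF0]


/-! ### Polar representation -/

lemma polar_repr {q x : Plane} (hne : x ≠ q) :
    ∃ θ : ℝ, x = X q (dist x q) θ := by
  set a := (x - q) 0 with hadef
  set b := (x - q) 1 with hbdef
  set z : ℂ := (a : ℂ) + (b : ℂ) * Complex.I with hz
  have hre : z.re = a := by simp [hz]
  have him : z.im = b := by simp [hz]
  have hznz : z ≠ 0 := by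
    intro h0
    apply hne
    have ha : a = 0 := by rw [← hre, h0]; simp
    have hb : b = 0 := by rw [← him, h0]; simp
    have : x - q = 0 := by
      ext i
      fin_cases i
      · exact ha
      · exact hb
    have := sub_eq_zero.mp this
    exact this
  have habs : ‖z‖ = dist x q := by
    rw [dist_eq_norm, EuclideanSpace.norm_eq, Fin.sum_univ_two, Complex.norm_def,
      Complex.normSq_apply, hre, him]
    congr 1
    rw [Real.norm_eq_abs, Real.norm_eq_abs, ← hadef, ← hbdef]
    rw [sq_abs, sq_abs]
    ring
  have habsnz : ‖z‖ ≠ 0 := by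
    simpa using hznz
  refine ⟨z.arg, ?_⟩
  ext i
  fin_cases i
  · show x 0 = X q (dist x q) z.arg 0
    have : X q (dist x q) z.arg 0 = q 0 + dist x q * Real.cos z.arg := by
      rw [X]
      simp [edir_apply0]
    rw [this, Complex.cos_arg hznz, hre, ← habs]
    field_simp
    rw [hadef]
    simp
  · show x 1 = X q (dist x q) z.arg 1
    have : X q (dist x q) z.arg 1 = q 1 + dist x q * Real.sin z.arg := by
      rw [X]
      simp [edir_apply1]
    rw [this, Complex.sin_arg, him, ← habs]
    field_simp
    rw [hbdef]
    simp

/-! ### Local unique continuation -/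

section UCPBall

variable {D : Set Plane} {u : Plane → ℝ} {lam : ℝ}
variable (hD : IsOpen D) (hu : ContDiffOn ℝ 2 u D)
  (heq : ∀ x ∈ D, planeLaplacian u x + lam * u x = 0)

include hD hu heq in
lemma ucp_ball {p : Plane} {ε R : ℝ} (hε : 0 < ε) (hεR : ε ≤ R)
    (hball : ball p R ⊆ D) (hz : ∀ x ∈ ball p ε, u x = 0) :
    ∀ x ∈ ball p R, u x = 0 := by
  intro x hx
  by_cases hxp : x = p
  · subst hxp
    exact hz x (mem_ball_self hε)
  set r := dist x p with hrdef
  have hr0 : 0 < r := dist_pos.2 hxp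
  have hrR : r < R := mem_ball.1 hx
  have hrabs : |r| < R := by rw [abs_of_pos hr0]; exact hrR
  have hAF : ∀ n : ℤ, AF u p n r = 0 := fun n =>
    AF_zero_all hD hu hball heq hε hεR hz n ⟨hr0, hrR⟩
  set h : ℝ → ℂ := fun θ => ((G u p r θ : ℝ) : ℂ) with hh
  have hcont : Continuous h :=
    Complex.continuous_ofReal.comp (contG_theta hD hu hball hrabs)
  have hper : Function.Periodic h (2*π) := by
    intro θ
    simp only [hh]
    rw [G_periodic r θ]
  have hcoefs : ∀ n : ℤ, ∫ θ in (0:ℝ)..(2*π), w n θ * h θ = 0 := fun n => hAF n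
  have hzero := zero_of_fourier h hcont hper hcoefs
  obtain ⟨θ, hθ⟩ := polar_repr hxp
  have := hzero θ
  simp only [hh] at this
  rw [Complex.ofReal_eq_zero] at this
  rw [hθ]
  exact this

end UCPBall

/-! ### Globalization -/

lemma ucp_global {D : Set Plane} (hD : IsOpen D) (hconn : IsPreconnected D)
    {u : Plane → ℝ} {lam : ℝ}
    (hu : ContDiffOn ℝ 2 u D)
    (heq : ∀ x ∈ D, planeLaplacian u x + lam * u x = 0)
    {U : Set Plane} (hUD : U ⊆ D) (hUo : IsOpen U) (hUne : U.Nonempty)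
    (hzU : ∀ x ∈ U, u x = 0) :
    ∀ x ∈ D, u x = 0 := by
  set S := {x : Plane | x ∈ D ∧ ∀ᶠ y in nhds x, u y = 0} with hS
  have hSopen : IsOpen S := by
    rw [isOpen_iff_mem_nhds]
    intro x hx
    obtain ⟨hxD, hev⟩ := hx
    obtain ⟨V, hVsub, hVopen, hxV⟩ := _root_.eventually_nhds_iff.1 hev
    have : V ∩ D ∈ nhds x := (hVopen.inter hD).mem_nhds ⟨hxV, hxD⟩
    filter_upwards [this] with y hy
    exact ⟨hy.2, _root_.eventually_nhds_iff.2 ⟨V ∩ D, fun z hz => hVsub z hz.1,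
      hVopen.inter hD, hy⟩⟩
  have hSne : S.Nonempty := by
    obtain ⟨x₀, hx₀⟩ := hUne
    exact ⟨x₀, hUD hx₀, _root_.eventually_nhds_iff.2 ⟨U, hzU, hUo, hx₀⟩⟩
  have hcl : D ∩ closure S ⊆ S := by
    intro x ⟨hxD, hxcl⟩
    obtain ⟨R, hRpos, hRsub⟩ := (isOpen_iff.1 hD) x hxD
    obtain ⟨p, hpS, hpx⟩ := Metric.mem_closure_iff.1 hxcl (R/4) (by linarith)
    obtain ⟨ε₀, hε₀pos, hε₀sub⟩ := Metric.eventually_nhds_iff_ball.1 hpS.2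
    set ε := min ε₀ (R/2) with hεdef
    have hεpos : 0 < ε := lt_min hε₀pos (by linarith)
    have hεR : ε ≤ R/2 := min_le_right _ _
    have hpball : ball p (R/2) ⊆ D := by
      intro y hy
      apply hRsub
      rw [mem_ball] at hy ⊢
      have := dist_triangle y p x
      rw [dist_comm x p] at hpx
      linarith
    have hzball : ∀ y ∈ ball p ε, u y = 0 := fun y hy =>
      hε₀sub y (mem_ball.2 (lt_of_lt_of_le (mem_ball.1 hy) (min_le_left _ _)))
    have h0 : ∀ y ∈ ball p (R/2), u y = 0 :=
      ucp_ball hD hu heq hεpos hεR hpball hzball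
    refine ⟨hxD, _root_.eventually_nhds_iff.2 ⟨ball p (R/2), h0, isOpen_ball, ?_⟩⟩
    rw [mem_ball, dist_comm x p] at *
    linarith
  have hDS : D ⊆ S := by
    by_contra hcon
    rw [Set.not_subset] at hcon
    obtain ⟨x, hxD, hxS⟩ := hcon
    have hxncl : x ∉ closure S := fun h => hxS (hcl ⟨hxD, h⟩)
    have hcover : D ⊆ S ∪ (closure S)ᶜ := by
      intro y hy
      by_cases h : y ∈ closure S
      · exact Or.inl (hcl ⟨hy, h⟩)
      · exact Or.inr h
    obtain ⟨s₀, hs₀⟩ := hSne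
    have hne1 : (D ∩ S).Nonempty := ⟨s₀, hs₀.1, hs₀⟩
    have hne2 : (D ∩ (closure S)ᶜ).Nonempty := ⟨x, hxD, hxncl⟩
    obtain ⟨y, hyD, hyS, hyc⟩ := hconn S (closure S)ᶜ hSopen
      isClosed_closure.isOpen_compl hcover hne1 hne2
    exact hyc (subset_closure hyS)
  intro x hxD
  exact ((hDS hxD).2).self_of_nhds

end Core
end UCP

open UCP UCP.Core in
/-- a C² solution of Δφ + λφ = 0 on an open connected planar set which is
constant on a nonempty open subset is constant on the whole set. -/
theorem helmholtz_constant_on_open_subset_implies_constant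
    (D : Set Plane) (hDopen : IsOpen D) (hDconn : IsConnected D)
    (lam : ℝ) (φ : Plane → ℝ)
    (hφ : ContDiffOn ℝ 2 φ D)
    (heq : ∀ x ∈ D, planeLaplacian φ x + lam * φ x = 0)
    (hconst : ∃ U : Set Plane, U ⊆ D ∧ IsOpen U ∧ U.Nonempty ∧ ∃ c : ℝ, ∀ x ∈ U, φ x = c) :
    ∃ c : ℝ, ∀ x ∈ D, φ x = c := by
  obtain ⟨U, hUD, hUopen, hUne, c, hc⟩ := hconst
  obtain ⟨x₀, hx₀⟩ := hUne
  have hfd0 : ∀ y ∈ U, fderiv ℝ φ y = 0 := by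
    intro y hy
    have hev : φ =ᶠ[nhds y] (fun _ => c) := by
      filter_upwards [hUopen.mem_nhds hy] with z hz using hc z hz
    rw [hev.fderiv_eq, fderiv_fun_const]
    rfl
  have hlap0 : planeLaplacian φ x₀ = 0 := by
    rw [planeLaplacian]
    have hev0 : (fun y => fderiv ℝ φ y (EuclideanSpace.single (0 : Fin 2) (1:ℝ)))
        =ᶠ[nhds x₀] (fun _ => (0:ℝ)) := by
      filter_upwards [hUopen.mem_nhds hx₀] with z hz
      rw [hfd0 z hz]
      rfl
    have hev1 : (fun y => fderiv ℝ φ y (EuclideanSpace.single (1 : Fin 2) (1:ℝ)))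
        =ᶠ[nhds x₀] (fun _ => (0:ℝ)) := by
      filter_upwards [hUopen.mem_nhds hx₀] with z hz
      rw [hfd0 z hz]
      rfl
    rw [hev0.fderiv_eq, hev1.fderiv_eq, fderiv_fun_const]
    simp
  have hlamc : lam * c = 0 := by
    have h := heq x₀ (hUD hx₀)
    rw [hlap0, hc x₀ hx₀] at h
    linarith
  set v : Plane → ℝ := fun x => φ x - c with hv
  have hvC2 : ContDiffOn ℝ 2 v D := hφ.sub contDiffOn_const
  have hlapv : ∀ x, planeLaplacian v x = planeLaplacian φ x := by
    intro x
    rw [planeLaplacian, planeLaplacian]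
    have h0 : (fun y => fderiv ℝ v y (EuclideanSpace.single (0 : Fin 2) (1:ℝ)))
        = (fun y => fderiv ℝ φ y (EuclideanSpace.single (0 : Fin 2) (1:ℝ))) := by
      funext y
      simp only [hv, fderiv_sub_const]
    have h1 : (fun y => fderiv ℝ v y (EuclideanSpace.single (1 : Fin 2) (1:ℝ)))
        = (fun y => fderiv ℝ φ y (EuclideanSpace.single (1 : Fin 2) (1:ℝ))) := by
      funext y
      simp only [hv, fderiv_sub_const]
    rw [h0, h1]
  have hveq : ∀ x ∈ D, planeLaplacian v x + lam * v x = 0 := by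
    intro x hx
    rw [hlapv x]
    have h := heq x hx
    simp only [hv]
    ring_nf
    ring_nf at h
    linarith [hlamc]
  have hzU : ∀ x ∈ U, v x = 0 := fun x hx => by simp [hv, hc x hx]
  have hfin := ucp_global hDopen hDconn.isPreconnected hvC2 hveq hUD hUopen ⟨x₀, hx₀⟩ hzU
  refine ⟨c, fun x hx => ?_⟩
  have h := hfin x hx
  simp only [hv] at h
  linarith
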